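/- arXiv:1504.02530 — 2 statements merged into one kernel-verified Lean document; each statement's English description precedes it below -/
import Mathlib

section
/- For a weighted tree T = (V,E,W) with |V| = n ≥ 3 and edge weights in (−1,1)∖{0}, the maximin value is attained at an adjacent triple: S(T,W) = max over edges {a,b} ∈ E of min over z ∈ (N(a) ∪ N(b)) ∖ {a,b} of ρ²_{ab|z}, where N(u) denotes the set of neighbors of u in T. In other words, in the max-min solution Alice and Bob may be taken to be adjacent vertices, and Eve's minimizing vertex z may be taken to be a neighbor of a or of b. -/
open SimpleGraph

/-- The squared partial correlation coefficient
`ρ²_{ab|z} = (σ_ab − σ_az·σ_bz)² / ((1 − σ_az²)·(1 − σ_bz²))`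
for a covariance function `σ` with unit diagonal. -/
noncomputable def rho2 {V : Type*} (σ : V → V → ℝ) (a b z : V) : ℝ :=
  (σ a b - σ a z * σ b z) ^ 2 / ((1 - (σ a z) ^ 2) * (1 - (σ b z) ^ 2))

/-- The maximin value `S(T,W) = max_{{a,b}} min_{z∉{a,b}} ρ²_{ab|z}`. -/
noncomputable def maximin {V : Type*} (σ : V → V → ℝ) : ℝ :=
  sSup {x : ℝ | ∃ a b : V, a ≠ b ∧
    x = sInf {y : ℝ | ∃ z : V, z ≠ a ∧ z ≠ b ∧ y = rho2 σ a b z}}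

/-!
On a tree the covariance is multiplicative along paths: if `m` lies on the path from `u` to `v`
then `σ_uv = σ_um σ_mv`. For non-adjacent `a, b`, Eve takes `z` strictly between them; the
numerator of `ρ²_{ab|z}` vanishes, so such pairs score at most `0`, while every edge scores at
least `0`.
For an edge `ab` and `z ∉ {a, b}`, one endpoint, say `a`, separates `b` from `z`, and then
`ρ²_{ab|z} = c (1 - t) / (1 - c t)` with `c = σ_ab²`, `t = σ_az²`, a decreasing function of `t`.
Replacing `z` by the neighbour of `a` on the path to `z` can only increase `t`, so Eve loses
nothing by restricting to `N(a) ∪ N(b)`.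
-/

section PartialCorrelation

variable {V : Type*} {σ : V → V → ℝ} {a b v z : V}

theorem rho2_nonneg (ha : |σ a z| ≤ 1) (hb : |σ b z| ≤ 1) : 0 ≤ rho2 σ a b z := by
  rw [← sq_le_one_iff_abs_le_one] at ha hb
  exact div_nonneg (sq_nonneg _) (mul_nonneg (sub_nonneg.2 ha) (sub_nonneg.2 hb))

theorem rho2_comm (h : σ a b = σ b a) : rho2 σ a b z = rho2 σ b a z := by
  rw [rho2, rho2, h, mul_comm (σ b z), mul_comm (1 - σ b z ^ 2)]

theorem rho2_eq_zero_of_mul (h : σ a b = σ a z * σ b z) : rho2 σ a b z = 0 := by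
  simp [rho2, h]

theorem rho2_eq_of_mul (h : σ b z = σ a b * σ a z) (hz : |σ a z| < 1) :
    rho2 σ a b z = σ a b ^ 2 * (1 - σ a z ^ 2) / (1 - σ a b ^ 2 * σ a z ^ 2) := by
  have hz' : 1 - σ a z ^ 2 ≠ 0 := (sub_pos.2 ((sq_lt_one_iff_abs_lt_one _).2 hz)).ne'
  have hnum : (σ a b - σ a z * (σ a b * σ a z)) ^ 2
      = (1 - σ a z ^ 2) * (σ a b ^ 2 * (1 - σ a z ^ 2)) := by ring
  have hden : (1 - σ a z ^ 2) * (1 - (σ a b * σ a z) ^ 2)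
      = (1 - σ a z ^ 2) * (1 - σ a b ^ 2 * σ a z ^ 2) := by ring
  rw [rho2, h, hnum, hden, mul_div_mul_left _ _ hz']

theorem mul_one_sub_div_one_sub_mul_le {c s t : ℝ} (hc₀ : 0 ≤ c) (hc₁ : c ≤ 1) (hst : s ≤ t)
    (ht : t < 1) : c * (1 - t) / (1 - c * t) ≤ c * (1 - s) / (1 - c * s) := by
  have hct : 0 < 1 - c * t := by
    rcases le_total 0 t with h | h <;> nlinarith
  have hcs : 0 < 1 - c * s := by nlinarith [mul_le_mul_of_nonneg_left hst hc₀]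
  rw [div_le_div_iff₀ hct hcs]
  nlinarith [mul_nonneg (mul_nonneg hc₀ (sub_nonneg.2 hc₁)) (sub_nonneg.2 hst)]

theorem rho2_le_rho2_of_mul (hv : σ b v = σ a b * σ a v) (hz : σ b z = σ a b * σ a z)
    (hab : |σ a b| ≤ 1) (hav : |σ a v| < 1) (hzv : |σ a z| ≤ |σ a v|) :
    rho2 σ a b v ≤ rho2 σ a b z := by
  rw [rho2_eq_of_mul hv hav, rho2_eq_of_mul hz (hzv.trans_lt hav)]
  exact mul_one_sub_div_one_sub_mul_le (sq_nonneg _) ((sq_le_one_iff_abs_le_one _).2 hab)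
    (sq_le_sq.2 hzv) ((sq_lt_one_iff_abs_lt_one _).2 hav)

end PartialCorrelation

namespace SimpleGraph.Walk

variable {V : Type*} {G : SimpleGraph V} {w : Sym2 V → ℝ} {u v : V}

theorem abs_prod_map_edges_le_one (hw : ∀ e ∈ G.edgeSet, |w e| < 1) (p : G.Walk u v) :
    |(p.edges.map w).prod| ≤ 1 := by
  induction p with
  | nil => simp
  | cons h q ih =>
    rw [edges_cons, List.map_cons, List.prod_cons, abs_mul]
    exact mul_le_one₀ (hw _ h).le (abs_nonneg _) ih

theorem abs_prod_map_edges_lt_one (hw : ∀ e ∈ G.edgeSet, |w e| < 1) {p : G.Walk u v}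
    (hp : ¬p.Nil) : |(p.edges.map w).prod| < 1 := by
  cases p with
  | nil => exact absurd .nil hp
  | cons h q =>
    rw [edges_cons, List.map_cons, List.prod_cons, abs_mul]
    exact mul_lt_one_of_nonneg_of_lt_one_left (abs_nonneg _) (hw _ h)
      (q.abs_prod_map_edges_le_one hw)

end SimpleGraph.Walk

section PathProduct

variable {V : Type*} {G : SimpleGraph V} {w : Sym2 V → ℝ} {σ : V → V → ℝ} {a b m u v z : V}

def IsPathProduct (G : SimpleGraph V) (w : Sym2 V → ℝ) (σ : V → V → ℝ) : Prop :=
  ∀ u u' : V, ∀ p : G.Walk u u', p.IsPath → σ u u' = (p.edges.map w).prod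

namespace IsPathProduct

theorem eq_mul_of_mem_support (hσ : IsPathProduct G w σ) {p : G.Walk u v} (hp : p.IsPath)
    (hm : m ∈ p.support) : σ u v = σ u m * σ m v := by
  classical
  rw [hσ _ _ _ (hp.takeUntil hm), hσ _ _ _ (hp.dropUntil hm), ← List.prod_append,
    ← List.map_append, ← Walk.edges_append, Walk.take_spec, hσ _ _ _ hp]

theorem symm (hσ : IsPathProduct G w σ) (hG : G.Preconnected) (u v : V) : σ u v = σ v u := by
  obtain ⟨p, hp⟩ := hG.exists_isPath u v
  rw [hσ _ _ _ hp, hσ _ _ _ hp.reverse, Walk.edges_reverse, List.map_reverse,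
    List.prod_reverse]

theorem abs_le_one (hσ : IsPathProduct G w σ) (hw : ∀ e ∈ G.edgeSet, |w e| < 1)
    (hG : G.Preconnected) (u v : V) : |σ u v| ≤ 1 := by
  obtain ⟨p, hp⟩ := hG.exists_isPath u v
  rw [hσ _ _ _ hp]
  exact Walk.abs_prod_map_edges_le_one hw _

theorem abs_lt_one (hσ : IsPathProduct G w σ) (hw : ∀ e ∈ G.edgeSet, |w e| < 1)
    (hG : G.Preconnected) (huv : u ≠ v) : |σ u v| < 1 := by
  obtain ⟨p, hp⟩ := hG.exists_isPath u v
  rw [hσ _ _ _ hp]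
  exact Walk.abs_prod_map_edges_lt_one hw (Walk.not_nil_of_ne huv)

theorem rho2_nonneg (hσ : IsPathProduct G w σ) (hw : ∀ e ∈ G.edgeSet, |w e| < 1)
    (hG : G.Preconnected) (a b z : V) : 0 ≤ rho2 σ a b z :=
  _root_.rho2_nonneg (hσ.abs_le_one hw hG a z) (hσ.abs_le_one hw hG b z)

theorem exists_adj_rho2_le_of_notMem_support (hσ : IsPathProduct G w σ)
    (hw : ∀ e ∈ G.edgeSet, |w e| < 1) (hG : G.Preconnected) (hab : G.Adj a b)
    {p : G.Walk a z} (hp : p.IsPath) (hb : b ∉ p.support) (hza : z ≠ a) :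
    ∃ v, v ≠ b ∧ G.Adj a v ∧ rho2 σ a b v ≤ rho2 σ a b z := by
  cases p with
  | nil => exact absurd rfl hza
  | @cons _ v _ hav q =>
    have hvb : v ≠ b := by rintro rfl; simp at hb
    have hbz : (Walk.cons hab.symm (Walk.cons hav q)).IsPath := hp.cons hb
    have hbv : (Walk.cons hab.symm (Walk.cons hav .nil)).IsPath := by
      simp [hab.ne', hav.ne, hvb.symm]
    have hz : σ b z = σ a b * σ a z := by
      rw [hσ.eq_mul_of_mem_support hbz (m := a) (by simp), hσ.symm hG b a]
    have hv : σ b v = σ a b * σ a v := by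
      rw [hσ.eq_mul_of_mem_support hbv (m := a) (by simp), hσ.symm hG b a]
    have hzv : |σ a z| ≤ |σ a v| := by
      rw [hσ.eq_mul_of_mem_support hp (m := v) (by simp), abs_mul]
      exact mul_le_of_le_one_right (abs_nonneg _) (hσ.abs_le_one hw hG v z)
    exact ⟨v, hvb, hav, rho2_le_rho2_of_mul hv hz (hσ.abs_le_one hw hG a b)
      (hσ.abs_lt_one hw hG hav.ne) hzv⟩

theorem exists_adj_rho2_le (hσ : IsPathProduct G w σ) (hw : ∀ e ∈ G.edgeSet, |w e| < 1)
    (hG : G.Preconnected) (hab : G.Adj a b) (hza : z ≠ a) (hzb : z ≠ b) :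
    ∃ v, v ≠ a ∧ v ≠ b ∧ (G.Adj a v ∨ G.Adj b v) ∧ rho2 σ a b v ≤ rho2 σ a b z := by
  classical
  obtain ⟨p, hp⟩ := hG.exists_isPath z a
  by_cases hb : b ∈ p.support
  · have ha := Walk.endpoint_notMem_support_takeUntil hp hb hab.ne
    obtain ⟨v, hva, hbv, hle⟩ := hσ.exists_adj_rho2_le_of_notMem_support hw hG hab.symm
      (hp.takeUntil hb).reverse (by simpa using ha) hzb
    refine ⟨v, hva, hbv.ne', Or.inr hbv, ?_⟩
    rwa [rho2_comm (hσ.symm hG a b), rho2_comm (hσ.symm hG a b)]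
  · obtain ⟨v, hvb, hav, hle⟩ := hσ.exists_adj_rho2_le_of_notMem_support hw hG hab
      hp.reverse (by simpa using hb) hza
    exact ⟨v, hav.ne', hvb, Or.inl hav, hle⟩

theorem exists_adj_rho2_eq_zero (hσ : IsPathProduct G w σ) (hG : G.Preconnected) (hab : a ≠ b)
    (hadj : ¬G.Adj a b) : ∃ v, G.Adj a v ∧ v ≠ b ∧ rho2 σ a b v = 0 := by
  obtain ⟨p, hp⟩ := hG.exists_isPath a b
  cases p with
  | nil => exact absurd rfl hab
  | @cons _ v _ hav q =>
    refine ⟨v, hav, by rintro rfl; exact hadj hav, rho2_eq_zero_of_mul ?_⟩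
    rw [hσ.eq_mul_of_mem_support hp (m := v) (by simp), hσ.symm hG v b]

theorem sInf_rho2_eq_sInf_rho2_adj (hσ : IsPathProduct G w σ) (hw : ∀ e ∈ G.edgeSet, |w e| < 1)
    (hG : G.Preconnected) (hab : G.Adj a b) :
    sInf {y : ℝ | ∃ z : V, z ≠ a ∧ z ≠ b ∧ y = rho2 σ a b z} =
      sInf {y : ℝ | ∃ z : V, z ≠ a ∧ z ≠ b ∧ (G.Adj a z ∨ G.Adj b z) ∧ y = rho2 σ a b z} := by
  apply csInf_eq_csInf_of_forall_exists_le
  · rintro _ ⟨z, hza, hzb, rfl⟩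
    obtain ⟨v, hva, hvb, hadj, hle⟩ := hσ.exists_adj_rho2_le hw hG hab hza hzb
    exact ⟨_, ⟨v, hva, hvb, hadj, rfl⟩, hle⟩
  · rintro _ ⟨z, hza, hzb, -, rfl⟩
    exact ⟨_, ⟨z, hza, hzb, rfl⟩, le_rfl⟩

end IsPathProduct

end PathProduct

theorem stmt_9_general {V : Type*}
    (G : SimpleGraph V) (hT : G.IsTree)
    (w : Sym2 V → ℝ)
    (hw : ∀ e ∈ G.edgeSet, w e ∈ Set.Ioo (-1 : ℝ) 1 ∧ w e ≠ 0)
    (σ : V → V → ℝ)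
    (hσ : ∀ u u' : V, ∀ p : G.Walk u u', p.IsPath → σ u u' = (p.edges.map w).prod) :
    maximin σ =
      sSup {x : ℝ | ∃ a b : V, G.Adj a b ∧
        x = sInf {y : ℝ | ∃ z : V, z ≠ a ∧ z ≠ b ∧ (G.Adj a z ∨ G.Adj b z) ∧
          y = rho2 σ a b z}} := by
  have hσ : IsPathProduct G w σ := hσ
  have hG : G.Preconnected := hT.connected.preconnected
  have hw : ∀ e ∈ G.edgeSet, |w e| < 1 := fun e he => abs_lt.2 (hw e he).1
  apply csSup_eq_csSup_of_forall_exists_le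
  · rintro _ ⟨a, b, hab, rfl⟩
    by_cases hadj : G.Adj a b
    · exact ⟨_, ⟨a, b, hadj, rfl⟩, (hσ.sInf_rho2_eq_sInf_rho2_adj hw hG hadj).le⟩
    · obtain ⟨v, hav, hvb, hzero⟩ := hσ.exists_adj_rho2_eq_zero hG hab hadj
      refine ⟨_, ⟨a, v, hav, rfl⟩,
        le_trans (csInf_le ?_ ⟨v, hav.ne', hvb, hzero.symm⟩) (Real.sInf_nonneg ?_)⟩
      · exact ⟨0, by rintro _ ⟨z, -, -, rfl⟩; exact hσ.rho2_nonneg hw hG _ _ _⟩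
      · rintro _ ⟨z, -, -, -, rfl⟩
        exact hσ.rho2_nonneg hw hG _ _ _
  · rintro _ ⟨a, b, hab, rfl⟩
    exact ⟨_, ⟨a, b, hab.ne, rfl⟩, (hσ.sInf_rho2_eq_sInf_rho2_adj hw hG hab).ge⟩

/-- For a weighted tree `T = (V,E,W)` with `|V| = n ≥ 3` and edge weights
in `(−1,1)∖{0}` (covariances `σ u u'` given by products of edge weights along unique
paths, `σ u u = 1`), the maximin value is attained at an adjacent triple:
`S(T,W) = max_{{a,b}∈E} min_{z ∈ (N(a)∪N(b))∖{a,b}} ρ²_{ab|z}`. -/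
theorem stmt_9 {V : Type*} [Fintype V] [DecidableEq V] (hcard : 3 ≤ Fintype.card V)
    (G : SimpleGraph V) (hT : G.IsTree)
    (w : Sym2 V → ℝ)
    (hw : ∀ e ∈ G.edgeSet, w e ∈ Set.Ioo (-1 : ℝ) 1 ∧ w e ≠ 0)
    (σ : V → V → ℝ)
    (hσ : ∀ u u' : V, ∀ p : G.Walk u u', p.IsPath → σ u u' = (p.edges.map w).prod) :
    maximin σ =
      sSup {x : ℝ | ∃ a b : V, G.Adj a b ∧
        x = sInf {y : ℝ | ∃ z : V, z ≠ a ∧ z ≠ b ∧ (G.Adj a z ∨ G.Adj b z) ∧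
          y = rho2 σ a b z}} :=
  stmt_9_general G hT w hw σ hσ
end

section
/- Let T be a finite tree with |V| ≥ 4 vertices and let α(T) denote the number of leaf edges of T whose non-leaf endpoint has degree exactly 2 (equivalently, for |V| ≥ 4, the number of leaf edges with no leaf siblings that are eligible for grafting). Then: (i) T admits a grafting operation if and only if α(T) > 0; in particular α(T) = 0 if and only if T is a least favorable (LF) structure; (ii) every grafting operation strictly decreases α; consequently, starting from T, an LF structure is reached after at most α(T) grafting operations. -/
/-!
Grafting the leaf `n₂` from its degree-2 neighbour `n₁` onto `v` makes `n₁` and `n₂` two leaves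
at `v`. In a connected graph on at least four vertices `v` already had a second neighbour, so it
now has degree at least 3: the edge `n₁n₂` stops being graftable and no new graftable edge
appears, while connectivity is preserved. So `α` strictly decreases along graftings, and
grafting as long as possible reaches an LF structure within `α(T)` steps.
-/

open SimpleGraph

/-- `Grafts G G'` : `G'` is obtained from `G` by one grafting operation. -/
def Grafts {V : Type*} (G G' : SimpleGraph V) : Prop :=
  ∃ n1 n2 v : V, G.Adj n1 n2 ∧ (G.neighborSet n2).ncard = 1 ∧
    (G.neighborSet n1).ncard = 2 ∧ G.Adj n1 v ∧ v ≠ n2 ∧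
    G' = G.deleteEdges {s(n1, n2)} ⊔ fromEdgeSet {s(v, n2)}

/-- `alphaCount G` : the number of leaf edges of `G` whose non-leaf endpoint has degree
exactly 2 (the leaf edges eligible for grafting). -/
noncomputable def alphaCount {V : Type*} (G : SimpleGraph V) : ℕ :=
  {e : Sym2 V | e ∈ G.edgeSet ∧ ∃ a b : V, e = s(a, b) ∧
    (G.neighborSet a).ncard = 1 ∧ (G.neighborSet b).ncard = 2}.ncard

namespace SimpleGraph

variable {V : Type*} {G H : SimpleGraph V}

lemma neighborSet_eq_singleton_of_ncard_eq_one {a b : V} (hab : G.Adj a b)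
    (hb : (G.neighborSet b).ncard = 1) : G.neighborSet b = {a} :=
  (Set.eq_of_subset_of_ncard_le (t := G.neighborSet b) (Set.singleton_subset_iff.mpr hab.symm)
    (by rw [hb, Set.ncard_singleton]) (Set.finite_of_ncard_ne_zero (by rw [hb]; norm_num))).symm

lemma neighborSet_eq_pair_of_ncard_eq_two {a b c : V} (hab : G.Adj a b) (hcb : G.Adj c b)
    (hac : a ≠ c) (hb : (G.neighborSet b).ncard = 2) : G.neighborSet b = {a, c} := by
  refine (Set.eq_of_subset_of_ncard_le ?_ (by rw [hb, Set.ncard_pair hac])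
    (Set.finite_of_ncard_ne_zero (by rw [hb]; norm_num))).symm
  rintro x (rfl | rfl)
  exacts [hab.symm, hcb.symm]

lemma Connected.eq_univ_of_neighborSet_subset (hG : G.Connected) {S : Set V} {x : V}
    (hx : x ∈ S) (hS : ∀ y ∈ S, G.neighborSet y ⊆ S) : S = Set.univ := by
  refine Set.eq_univ_of_forall fun y => by_contra fun hy => ?_
  obtain ⟨d, -, hd, hd'⟩ := (hG x y).some.exists_boundary_dart S hx hy
  exact hd' (hS _ hd d.adj)

lemma Connected.of_forall_adj_reachable (hG : G.Connected)
    (h : ∀ ⦃x y⦄, G.Adj x y → H.Reachable x y) : H.Connected := by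
  have := hG.nonempty
  refine ⟨fun x y => ?_⟩
  simp only [reachable_iff_reflTransGen] at h ⊢
  exact Relation.reflTransGen_closed h x y ((reachable_iff_reflTransGen x y).mp (hG x y))

lemma Connected.two_le_ncard_neighborSet_of_pendant_path [Fintype V] (hG : G.Connected)
    (hcard : 4 ≤ Fintype.card V) {n1 n2 v : V} (hN2 : G.neighborSet n2 = {n1})
    (hN1 : G.neighborSet n1 = {n2, v}) : 2 ≤ (G.neighborSet v).ncard := by
  have hn1v : G.Adj n1 v := by simp [← mem_neighborSet, hN1]
  by_contra! hv
  have hNv : G.neighborSet v = {n1} := neighborSet_eq_singleton_of_ncard_eq_one hn1v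
    (le_antisymm (by omega) ((Set.ncard_pos (Set.toFinite _)).mpr ⟨n1, hn1v.symm⟩))
  have hS : ({n1, n2, v} : Set V) = Set.univ := by
    refine hG.eq_univ_of_neighborSet_subset (Set.mem_insert n1 _) ?_
    rintro y (rfl | rfl | rfl)
    · rw [hN1]; exact Set.subset_insert _ _
    · rw [hN2]; exact Set.singleton_subset_iff.mpr (Set.mem_insert _ _)
    · rw [hNv]; exact Set.singleton_subset_iff.mpr (Set.mem_insert _ _)
  have : Fintype.card V ≤ 3 := by
    rw [← Nat.card_eq_fintype_card, ← Set.ncard_univ, ← hS]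
    exact (Set.ncard_insert_le _ _).trans (Nat.succ_le_succ
      ((Set.ncard_insert_le _ _).trans (by rw [Set.ncard_singleton])))
  omega

end SimpleGraph

theorem exists_chain_to_irreducible {α : Type*} {r : α → α → Prop} (μ : α → ℕ) {P : α → Prop}
    (hr : ∀ ⦃x y⦄, P x → r x y → P y ∧ μ y < μ x) {x : α} (hx : P x) :
    ∃ (k : ℕ) (f : ℕ → α), k ≤ μ x ∧ f 0 = x ∧ (∀ i < k, r (f i) (f (i + 1))) ∧
      ¬ ∃ y, r (f k) y := by
  induction x using (measure μ).wf.induction with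
  | _ x ih =>
    by_cases hred : ∃ y, r x y
    · obtain ⟨y, hxy⟩ := hred
      obtain ⟨hy, hlt⟩ := hr hx hxy
      obtain ⟨k, f, hk, hf0, hf, hirr⟩ := ih y hlt hy
      refine ⟨k + 1, fun | 0 => x | i + 1 => f i, by omega, rfl, ?_, hirr⟩
      rintro (_ | i) hi
      · simpa [hf0] using hxy
      · exact hf i (by omega)
    · exact ⟨0, fun _ => x, Nat.zero_le _, rfl, by simp, hred⟩

namespace SimpleGraph

variable {V : Type*} {G : SimpleGraph V} {n1 n2 v x y : V}

def graft (G : SimpleGraph V) (n1 n2 v : V) : SimpleGraph V :=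
  G.deleteEdges {s(n1, n2)} ⊔ fromEdgeSet {s(v, n2)}

lemma graft_adj : (G.graft n1 n2 v).Adj x y ↔
    (G.Adj x y ∧ s(x, y) ≠ s(n1, n2)) ∨ (s(x, y) = s(v, n2) ∧ x ≠ y) := by
  simp [graft]

lemma Adj.of_graft (h : (G.graft n1 n2 v).Adj x y) (hx : x ≠ v) (hy : y ≠ v) : G.Adj x y := by
  rcases graft_adj.mp h with ⟨h, -⟩ | ⟨h, -⟩
  · exact h
  · rw [Sym2.eq_iff] at h
    tauto

lemma Connected.graft (hG : G.Connected) (hn1v : G.Adj n1 v) (hvn2 : v ≠ n2) :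
    (G.graft n1 n2 v).Connected := by
  refine hG.of_forall_adj_reachable fun x y hxy => ?_
  by_cases he : s(x, y) = s(n1, n2)
  · have hn1n2 : (G.graft n1 n2 v).Reachable n1 n2 :=
      (graft_adj.mpr (.inl ⟨hn1v, by simp [hvn2, hn1v.ne.symm]⟩)).reachable.trans
        (graft_adj.mpr (.inr ⟨rfl, hvn2⟩)).reachable
    rcases Sym2.eq_iff.mp he with ⟨rfl, rfl⟩ | ⟨rfl, rfl⟩
    exacts [hn1n2, hn1n2.symm]
  · exact (graft_adj.mpr (.inl ⟨hxy, he⟩)).reachable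

lemma neighborSet_graft_of_ne (hx1 : x ≠ n1) (hx2 : x ≠ n2) (hxv : x ≠ v) :
    (G.graft n1 n2 v).neighborSet x = G.neighborSet x := by
  ext y
  simp only [mem_neighborSet, graft_adj, ne_eq, Sym2.eq_iff]
  constructor
  · rintro (⟨h, h'⟩ | ⟨h, h'⟩) <;> tauto
  · intro h
    exact .inl ⟨h, by tauto⟩

lemma neighborSet_graft_left (hN1 : G.neighborSet n1 = {n2, v}) (hvn2 : v ≠ n2) :
    (G.graft n1 n2 v).neighborSet n1 = {v} := by
  have hn1v : n1 ≠ v := (show G.Adj n1 v by simp [← mem_neighborSet, hN1]).ne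
  ext y
  simp only [mem_neighborSet, graft_adj, ne_eq, Sym2.eq_iff, ← mem_neighborSet G, hN1,
    Set.mem_insert_iff, Set.mem_singleton_iff]
  constructor
  · rintro (⟨h, h'⟩ | ⟨h, h'⟩) <;> tauto
  · rintro rfl
    exact .inl ⟨.inr rfl, by tauto⟩

lemma neighborSet_graft_right (hn1v : G.Adj n1 v) (hvn2 : v ≠ n2) :
    (G.graft n1 n2 v).neighborSet v = insert n2 (G.neighborSet v) := by
  have := hn1v.ne
  ext y
  simp only [mem_neighborSet, graft_adj, ne_eq, Sym2.eq_iff, Set.mem_insert_iff]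
  constructor
  · rintro (⟨h, h'⟩ | ⟨h, h'⟩) <;> tauto
  · rintro (rfl | h)
    · exact .inr ⟨by tauto, hvn2⟩
    · exact .inl ⟨h, by tauto⟩

lemma neighborSet_graft_pendant (hN2 : G.neighborSet n2 = {n1}) (hvn2 : v ≠ n2) :
    (G.graft n1 n2 v).neighborSet n2 = {v} := by
  have hn12 : n1 ≠ n2 := (show G.Adj n2 n1 by simp [← mem_neighborSet, hN2]).ne.symm
  ext y
  simp only [mem_neighborSet, graft_adj, ne_eq, Sym2.eq_iff, ← mem_neighborSet G, hN2,
    Set.mem_singleton_iff]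
  constructor
  · rintro (⟨h, h'⟩ | ⟨h, h'⟩) <;> tauto
  · rintro rfl
    exact .inr ⟨by tauto, hvn2.symm⟩

lemma ncard_neighborSet_graft_of_ne (hN2 : G.neighborSet n2 = {n1}) (hvn2 : v ≠ n2)
    (hx1 : x ≠ n1) (hxv : x ≠ v) :
    ((G.graft n1 n2 v).neighborSet x).ncard = (G.neighborSet x).ncard := by
  by_cases hx2 : x = n2
  · subst hx2
    rw [neighborSet_graft_pendant hN2 hvn2, hN2, Set.ncard_singleton, Set.ncard_singleton]
  · rw [neighborSet_graft_of_ne hx1 hx2 hxv]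

end SimpleGraph

def graftableEdges {V : Type*} (G : SimpleGraph V) : Set (Sym2 V) :=
  {e : Sym2 V | e ∈ G.edgeSet ∧ ∃ a b : V, e = s(a, b) ∧
    (G.neighborSet a).ncard = 1 ∧ (G.neighborSet b).ncard = 2}

lemma alphaCount_eq_ncard_graftableEdges {V : Type*} (G : SimpleGraph V) :
    alphaCount G = (graftableEdges G).ncard := rfl

section Grafting

variable {V : Type*} {G G' : SimpleGraph V} {n1 n2 v : V}

lemma pendant_mem_graftableEdges (hN2 : G.neighborSet n2 = {n1})
    (hN1 : G.neighborSet n1 = {n2, v}) (hvn2 : v ≠ n2) : s(n1, n2) ∈ graftableEdges G :=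
  ⟨show G.Adj n1 n2 by simp [← mem_neighborSet, hN1], n2, n1, Sym2.eq_swap,
    by rw [hN2, Set.ncard_singleton], by rw [hN1, Set.ncard_pair hvn2.symm]⟩

lemma graftableEdges_graft_subset (hN2 : G.neighborSet n2 = {n1})
    (hN1 : G.neighborSet n1 = {n2, v}) (hvn2 : v ≠ n2) (hv : 2 ≤ (G.neighborSet v).ncard) :
    graftableEdges (G.graft n1 n2 v) ⊆ graftableEdges G \ {s(n1, n2)} := by
  have hn1v : G.Adj n1 v := by simp [← mem_neighborSet, hN1]
  have hN1' := neighborSet_graft_left hN1 hvn2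
  have hdeg_n1 : ((G.graft n1 n2 v).neighborSet n1).ncard = 1 := by
    rw [hN1', Set.ncard_singleton]
  have hdeg_v : 3 ≤ ((G.graft n1 n2 v).neighborSet v).ncard := by
    have hn2 : n2 ∉ G.neighborSet v := fun h => hn1v.ne.symm <| by
      simpa [hN2] using (show v ∈ G.neighborSet n2 from h.symm)
    rw [neighborSet_graft_right hn1v hvn2,
      Set.ncard_insert_of_notMem hn2 (Set.finite_of_ncard_pos (by omega))]
    omega
  rintro _ ⟨hab, a, b, rfl, ha, hb⟩
  have hav : a ≠ v := by rintro rfl; omega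
  have hbv : b ≠ v := by rintro rfl; omega
  have hbn1 : b ≠ n1 := by rintro rfl; omega
  have han1 : a ≠ n1 := by
    rintro rfl
    exact hbv (by simpa [← mem_neighborSet, hN1'] using hab)
  refine ⟨⟨Adj.of_graft hab hav hbv, a, b, rfl, ?_, ?_⟩, ?_⟩
  · rwa [← ncard_neighborSet_graft_of_ne hN2 hvn2 han1 hav]
  · rwa [← ncard_neighborSet_graft_of_ne hN2 hvn2 hbn1 hbv]
  · simp [han1, hbn1]

lemma alphaCount_graft_lt [Finite V] (hN2 : G.neighborSet n2 = {n1})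
    (hN1 : G.neighborSet n1 = {n2, v}) (hvn2 : v ≠ n2) (hv : 2 ≤ (G.neighborSet v).ncard) :
    alphaCount (G.graft n1 n2 v) < alphaCount G := by
  simp only [alphaCount_eq_ncard_graftableEdges]
  calc _ ≤ (graftableEdges G \ {s(n1, n2)}).ncard :=
        Set.ncard_le_ncard (graftableEdges_graft_subset hN2 hN1 hvn2 hv)
    _ < (graftableEdges G).ncard :=
        Set.ncard_sdiff_singleton_lt_of_mem (pendant_mem_graftableEdges hN2 hN1 hvn2)

lemma grafts_iff : Grafts G G' ↔ ∃ n1 n2 v, G.neighborSet n2 = {n1} ∧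
    G.neighborSet n1 = {n2, v} ∧ v ≠ n2 ∧ G' = G.graft n1 n2 v := by
  constructor
  · rintro ⟨n1, n2, v, h12, h2, h1, h1v, hvn2, rfl⟩
    exact ⟨n1, n2, v, neighborSet_eq_singleton_of_ncard_eq_one h12 h2,
      neighborSet_eq_pair_of_ncard_eq_two h12.symm h1v.symm hvn2.symm h1, hvn2, rfl⟩
  · rintro ⟨n1, n2, v, hN2, hN1, hvn2, rfl⟩
    exact ⟨n1, n2, v, by simp [← mem_neighborSet, hN1], by rw [hN2, Set.ncard_singleton],
      by rw [hN1, Set.ncard_pair hvn2.symm], by simp [← mem_neighborSet, hN1], hvn2, rfl⟩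

lemma Grafts.connected (hG : G.Connected) (h : Grafts G G') : G'.Connected := by
  obtain ⟨n1, n2, v, -, hN1, hvn2, rfl⟩ := grafts_iff.mp h
  exact hG.graft (by simp [← mem_neighborSet, hN1]) hvn2

lemma Grafts.alphaCount_lt [Fintype V] (hcard : 4 ≤ Fintype.card V) (hG : G.Connected)
    (h : Grafts G G') : alphaCount G' < alphaCount G := by
  obtain ⟨n1, n2, v, hN2, hN1, hvn2, rfl⟩ := grafts_iff.mp h
  exact alphaCount_graft_lt hN2 hN1 hvn2
    (hG.two_le_ncard_neighborSet_of_pendant_path hcard hN2 hN1)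

lemma exists_grafts_iff [Finite V] : (∃ G', Grafts G G') ↔ 0 < alphaCount G := by
  rw [alphaCount_eq_ncard_graftableEdges, Set.ncard_pos]
  constructor
  · rintro ⟨G', h⟩
    obtain ⟨n1, n2, v, hN2, hN1, hvn2, -⟩ := grafts_iff.mp h
    exact ⟨_, pendant_mem_graftableEdges hN2 hN1 hvn2⟩
  · rintro ⟨_, hab, a, b, rfl, ha, hb⟩
    obtain ⟨c, hbc, hca⟩ := Set.exists_ne_of_one_lt_ncard (s := G.neighborSet b) (by omega) a
    exact ⟨_, b, a, c, hab.symm, ha, hb, hbc, hca, rfl⟩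

end Grafting

/-- For a finite tree `T` with `|V| ≥ 4`:
(i) `T` admits a grafting operation iff `α(T) > 0` (so `α(T) = 0` iff `T` is LF);
(ii) every grafting operation strictly decreases `α`;
consequently an LF structure is reached from `T` after at most `α(T)` graftings. -/
theorem stmt_11 {V : Type*} [Fintype V] (hcard : 4 ≤ Fintype.card V)
    (T : SimpleGraph V) (hT : T.IsTree) :
    ((∃ T', Grafts T T') ↔ 0 < alphaCount T) ∧
      ((alphaCount T = 0) ↔ ¬ ∃ T', Grafts T T') ∧
      (∀ T' : SimpleGraph V, Grafts T T' → alphaCount T' < alphaCount T) ∧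
      (∃ (k : ℕ) (f : ℕ → SimpleGraph V), k ≤ alphaCount T ∧ f 0 = T ∧
        (∀ i < k, Grafts (f i) (f (i + 1))) ∧ ¬ ∃ T', Grafts (f k) T') := by
  refine ⟨exists_grafts_iff, by rw [exists_grafts_iff]; omega,
    fun _ h => h.alphaCount_lt hcard hT.connected, ?_⟩
  exact exists_chain_to_irreducible alphaCount
    (fun _ _ hG h => ⟨h.connected hG, h.alphaCount_lt hcard hG⟩) hT.connected
end
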